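/- arXiv:2403.01839 — 6 statements merged into one kernel-verified Lean document; each statement's English description precedes it below -/
import Mathlib

section
/- Let R be a commutative ring and let A be an n×n alternating matrix over R, i.e., Aᵀ = −A and every diagonal entry of A is zero. Then det A is a square in R: there exists p ∈ R such that det A = p². -/
/-!
Over a field of characteristic `≠ 2`, a nonzero entry `c = A j 0` of a skew-symmetric matrix
gives, after moving it into the top-left `2 × 2` block, `det A = c ^ 2 * det S` with `S` the Schur
complement of that block, which is again skew-symmetric; induction on the size finishes.
For a general commutative ring, the generic alternating matrix `(X_ij - X_ji)` over `ℤ[X_ij]`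
specializes to `A`; its determinant is a square in the fraction field, hence in the integrally
closed ring `ℤ[X_ij]`.
-/

open Matrix

theorem exists_equiv_sum_fin_two {n : ℕ} {j : Fin (n + 2)} (hj : j ≠ 0) :
    ∃ g : Fin 2 ⊕ Fin n ≃ Fin (n + 2), g (.inl 0) = 0 ∧ g (.inl 1) = j := by
  let e : Fin 2 ⊕ Fin n ≃ Fin (n + 2) := finSumFinEquiv.trans (finCongr (Nat.add_comm 2 n))
  have he0 : e (.inl 0) = 0 := rfl
  have he1 : e (.inl 1) = 1 := rfl
  refine ⟨e.trans (Equiv.swap 1 j), ?_, ?_⟩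
  · simp only [Equiv.trans_apply, he0]
    exact Equiv.swap_apply_of_ne_of_ne zero_ne_one hj.symm
  · simp only [Equiv.trans_apply, he1, Equiv.swap_apply_left]

namespace Matrix

variable {m n R : Type*} [Fintype m] [DecidableEq m] [CommRing R]

theorem transpose_invOf_eq_neg {A : Matrix m m R} [Invertible A] (hA : Aᵀ = -A) :
    (⅟A)ᵀ = -⅟A := by
  let : Invertible Aᵀ := invertibleTranspose A
  let : Invertible (-A) := invertibleNeg A
  rw [transpose_invOf]
  simp only [hA, invOf_neg]

theorem transpose_schurComplement_eq_neg {A : Matrix m m R} {B : Matrix m n R}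
    {C : Matrix n m R} {D : Matrix n n R} [Invertible A]
    (h : (fromBlocks A B C D)ᵀ = -fromBlocks A B C D) :
    (D - C * ⅟A * B)ᵀ = -(D - C * ⅟A * B) := by
  rw [fromBlocks_transpose, fromBlocks_neg, fromBlocks_inj] at h
  obtain ⟨hA, hB, hC, hD⟩ := h
  rw [transpose_sub, transpose_mul, transpose_mul, transpose_invOf_eq_neg hA, hB, hC, hD]
  simp only [Matrix.neg_mul, Matrix.mul_neg, neg_neg, neg_sub, sub_neg_eq_add, Matrix.mul_assoc]
  abel

theorem exists_det_eq_sq_of_transpose_eq_neg {K : Type*} [Field K] (hK : ringChar K ≠ 2) :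
    ∀ {n : ℕ} (A : Matrix (Fin n) (Fin n) K), Aᵀ = -A → ∃ p : K, A.det = p ^ 2 := by
  have hdiag {n : ℕ} (A : Matrix (Fin n) (Fin n) K) (hA : Aᵀ = -A) (i : Fin n) : A i i = 0 :=
    (Ring.eq_self_iff_eq_zero_of_char_ne_two hK).mp (congrFun (congrFun hA i) i).symm
  intro n
  induction n using Nat.twoStepInduction with
  | zero => exact fun _ _ => ⟨1, by simp⟩
  | one => exact fun A hA => ⟨0, by simp [hdiag A hA]⟩
  | more n ih _ =>
    intro A hA
    by_cases hcol : ∀ i, A i 0 = 0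
    · exact ⟨0, by simp [det_eq_zero_of_column_eq_zero 0 hcol]⟩
    obtain ⟨j, hj⟩ := not_forall.mp hcol
    obtain ⟨g, hg0, hg1⟩ := exists_equiv_sum_fin_two fun h : j = 0 => hj (h ▸ hdiag A hA 0)
    set M := A.submatrix g g
    have hM : Mᵀ = -M := by rw [transpose_submatrix, hA]; rfl
    have hM₁₁ : M.toBlocks₁₁.det = A j 0 ^ 2 := by
      have h : A 0 j = -A j 0 := congrFun (congrFun hA j) 0
      simp [det_fin_two, M, toBlocks₁₁, hg0, hg1, hdiag A hA, h, sq]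
    have : Invertible M.toBlocks₁₁ :=
      M.toBlocks₁₁.invertibleOfIsUnitDet (hM₁₁ ▸ (pow_ne_zero 2 hj).isUnit)
    rw [← fromBlocks_toBlocks M] at hM
    obtain ⟨p, hp⟩ := ih _ (transpose_schurComplement_eq_neg hM)
    refine ⟨A j 0 * p, ?_⟩
    rw [← det_submatrix_equiv_self g A, ← fromBlocks_toBlocks (A.submatrix g g), det_fromBlocks₁₁,
      hM₁₁, hp]
    ring

end Matrix

theorem IsIntegrallyClosed.exists_eq_sq_of_algebraMap_eq_sq {R K : Type*} [CommRing R]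
    [IsIntegrallyClosed R] [CommRing K] [Algebra R K] [IsFractionRing R K] {r : R} {x : K}
    (h : algebraMap R K r = x ^ 2) : ∃ y : R, r = y ^ 2 := by
  obtain ⟨y, hy⟩ := exists_algebraMap_eq_of_isIntegral_pow two_pos (h ▸ isIntegral_algebraMap)
  exact ⟨y, IsFractionRing.injective R K (by rw [map_pow, hy, h])⟩

open MvPolynomial

noncomputable def genericSkewMatrix (ι : Type*) : Matrix ι ι (MvPolynomial (ι × ι) ℤ) :=
  of fun i j => X (i, j) - X (j, i)

theorem genericSkewMatrix_transpose (ι : Type*) :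
    (genericSkewMatrix ι)ᵀ = -genericSkewMatrix ι := by
  ext i j
  simp [genericSkewMatrix]

theorem genericSkewMatrix_map_eval₂Hom {ι R : Type*} [LinearOrder ι] [CommRing R]
    {A : Matrix ι ι R} (hA : Aᵀ = -A) (hdiag : ∀ i, A i i = 0) :
    (genericSkewMatrix ι).map
      (eval₂Hom (Int.castRingHom R) fun ij => if ij.1 < ij.2 then A ij.1 ij.2 else 0)
      = A := by
  ext i j
  have h : A j i = -A i j := congrFun (congrFun hA i) j
  rcases lt_trichotomy i j with hij | rfl | hij
  · simp [genericSkewMatrix, hij, hij.not_gt]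
  · simp [genericSkewMatrix, hdiag]
  · simp [genericSkewMatrix, hij, hij.not_gt, h]

theorem exists_det_genericSkewMatrix_eq_sq (n : ℕ) :
    ∃ q, (genericSkewMatrix (Fin n)).det = q ^ 2 := by
  let S := MvPolynomial (Fin n × Fin n) ℤ
  let φ := algebraMap S (FractionRing S)
  have : CharZero (FractionRing S) :=
    charZero_of_injective_algebraMap (IsFractionRing.injective S (FractionRing S))
  have hskew : ((genericSkewMatrix (Fin n)).map φ)ᵀ = -(genericSkewMatrix (Fin n)).map φ := by
    rw [← transpose_map, genericSkewMatrix_transpose, Matrix.map_neg _ (map_neg φ)]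
  obtain ⟨p, hp⟩ := exists_det_eq_sq_of_transpose_eq_neg (by simp) _ hskew
  rw [← RingHom.mapMatrix_apply, ← RingHom.map_det] at hp
  exact IsIntegrallyClosed.exists_eq_sq_of_algebraMap_eq_sq hp

/-- The determinant of an alternating matrix over a commutative ring is a square
(namely the square of the Pfaffian). -/
theorem det_alternating_is_square {R : Type*} [CommRing R] {n : ℕ}
    (A : Matrix (Fin n) (Fin n) R) (hskew : Aᵀ = -A) (hdiag : ∀ i, A i i = 0) :
    ∃ p : R, A.det = p ^ 2 := by
  obtain ⟨q, hq⟩ := exists_det_genericSkewMatrix_eq_sq n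
  let φ := eval₂Hom (Int.castRingHom R)
    fun ij : Fin n × Fin n => if ij.1 < ij.2 then A ij.1 ij.2 else 0
  refine ⟨φ q, ?_⟩
  rw [← genericSkewMatrix_map_eval₂Hom hskew hdiag, ← RingHom.mapMatrix_apply, ← RingHom.map_det,
    hq, map_pow]
end

section
/- Let F be a field and let A be an n×n alternating matrix over F (Aᵀ = −A and all diagonal entries zero). If X is a subset of the index set such that the rows of A indexed by X form a basis of the row space of A (equivalently, |X| equals the rank of A and the rows indexed by X are linearly independent), then the principal submatrix A[X, X] is nonsingular. -/
/-!
If the rows of `A` indexed by `X` span its row space, then `A` and `A[X, -]` have the same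
kernel. Extend a kernel vector `v` of `A[X, X]` by zero to `w`: then `A[X, -] w = A[X, X] v = 0`,
so `A w = 0`, and by skew-symmetry `wᵀ A = -(A w)ᵀ = 0`. But `wᵀ A = vᵀ A[X, -]` is a linear
combination of the independent rows indexed by `X`, so `v = 0`.
-/

open Matrix

namespace Matrix

open Submodule

variable {ι m n F : Type*} [Field F] [Fintype n] [Fintype ι]

theorem mulVec_eq_zero_of_span_row_le {k : Type*} [Fintype k] {A : Matrix m n F}
    {B : Matrix k n F} (hAB : span F (Set.range A.row) ≤ span F (Set.range B.row)) {u : n → F}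
    (hu : B *ᵥ u = 0) : A *ᵥ u = 0 := by
  ext i
  obtain ⟨c, hc⟩ : A.row i ∈ LinearMap.range B.vecMulLinear :=
    _root_.range_vecMulLinear B ▸ hAB (subset_span ⟨i, rfl⟩)
  simp only [vecMulLinear_apply] at hc
  rw [Pi.zero_apply, mulVec, ← row_apply' A i, ← hc, ← dotProduct_mulVec, hu, dotProduct_zero]

theorem span_row_le_of_linearIndependent_of_card_eq_rank [Fintype m] {A : Matrix m n F}
    {e : ι → m} (hli : LinearIndependent F (A.submatrix e id).row)
    (hcard : Fintype.card ι = A.rank) :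
    span F (Set.range A.row) ≤ span F (Set.range (A.submatrix e id).row) := by
  refine (eq_of_le_of_finrank_le ?_ ?_).ge
  · exact span_mono (Set.range_subset_iff.2 fun i => ⟨e i, rfl⟩)
  · rw [← rank_eq_finrank_span_row, ← rank_eq_finrank_span_row, hli.rank_matrix, hcard]

theorem det_submatrix_ne_zero_of_span_row_le [DecidableEq ι] {A : Matrix n n F}
    (hker : ∀ w, A *ᵥ w = 0 → w ᵥ* A = 0) {e : ι → n}
    (hli : LinearIndependent F (A.submatrix e id).row)
    (hspan : span F (Set.range A.row) ≤ span F (Set.range (A.submatrix e id).row)) :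
    (A.submatrix e e).det ≠ 0 := by
  classical
  -- `v ᵥ* S` is `v` extended by zero along `e`
  set S : Matrix ι n F := (1 : Matrix n n F).submatrix e id
  have hSA : S * A = A.submatrix e id := by
    simpa using (submatrix_mul 1 A e id id Function.bijective_id).symm
  have hASt : A.submatrix e id * Sᵀ = A.submatrix e e := by
    ext i j
    simp [S, mul_apply, one_apply]
  rw [Ne, ← exists_mulVec_eq_zero_iff]
  rintro ⟨v, hv0, hv⟩
  have hAw : A *ᵥ (v ᵥ* S) = 0 :=
    mulVec_eq_zero_of_span_row_le hspan (by rw [← mulVec_transpose, mulVec_mulVec, hASt, hv])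
  refine hv0 (vecMul_injective_iff.2 hli (?_ : v ᵥ* A.submatrix e id = 0 ᵥ* _))
  rw [zero_vecMul, ← hSA, ← vecMul_vecMul, hker _ hAw]

end Matrix

theorem alternating_principal_submatrix_nonsingular_general {F : Type*} [Field F] {n : ℕ}
    (A : Matrix (Fin n) (Fin n) F) (hskew : Aᵀ = -A)
    (X : Finset (Fin n))
    (hindep : LinearIndependent F (fun i : X => A (i : Fin n)))
    (hcard : X.card = A.rank) :
    (A.submatrix (fun i : X => (i : Fin n)) (fun j : X => (j : Fin n))).det ≠ 0 := by
  have hker : ∀ w, A *ᵥ w = 0 → w ᵥ* A = 0 := fun w hw => by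
    rw [← mulVec_transpose, hskew, neg_mulVec, hw, neg_zero]
  exact det_submatrix_ne_zero_of_span_row_le hker hindep
    (span_row_le_of_linearIndependent_of_card_eq_rank hindep ((Fintype.card_coe X).trans hcard))

/-- For an alternating matrix over a field, if the rows indexed by `X` form a basis of the
row space (i.e. they are linearly independent and `|X|` equals the rank), then the principal
submatrix `A[X, X]` is nonsingular. -/
theorem alternating_principal_submatrix_nonsingular {F : Type*} [Field F] {n : ℕ}
    (A : Matrix (Fin n) (Fin n) F) (hskew : Aᵀ = -A) (hdiag : ∀ i, A i i = 0)
    (X : Finset (Fin n))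
    (hindep : LinearIndependent F (fun i : X => A (i : Fin n)))
    (hcard : X.card = A.rank) :
    (A.submatrix (fun i : X => (i : Fin n)) (fun j : X => (j : Fin n))).det ≠ 0 :=
  alternating_principal_submatrix_nonsingular_general A hskew X hindep hcard
end

section
/- (Harvey's update lemma, determinant part) Let F be a field, let M be a nonsingular n×n matrix over F, and let S, T be subsets of the index set [n]. Let M̃ be an n×n matrix over F that agrees with M on every entry (i, j) with i ∉ S or j ∉ T, and set Δ = M̃[S, T] − M[S, T]. Then det(M̃) = det(M) · det(I + Δ · M⁻¹[T, S]), where I is the S×S identity matrix. In particular, M̃ is nonsingular if and only if I + Δ · M⁻¹[T, S] is nonsingular. -/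
/-!
`Mt - M` vanishes outside `S × T`, so it factors as `U * Δ * V` through the coordinate
inclusions `U : F^S → F^n` and `V : F^n → F^T`. The matrix determinant lemma
`det (M + U * W) = det M * det (1 + W * M⁻¹ * U)` with `W = Δ * V` then gives the claim, since
`V * M⁻¹ * U` is the submatrix `M⁻¹[T, S]`.
-/

open Matrix

namespace Matrix

variable {n o α : Type*}

theorem eq_one_submatrix_mul_submatrix_mul_one_submatrix [Semiring α] [DecidableEq n]
    [DecidableEq o] (D : Matrix n o α) (S : Finset n) (T : Finset o)
    (hD : ∀ i j, i ∉ S ∨ j ∉ T → D i j = 0) :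
    D = (1 : Matrix n n α).submatrix id ((↑) : S → n) *
        D.submatrix ((↑) : S → n) ((↑) : T → o) *
      (1 : Matrix o o α).submatrix ((↑) : T → o) id := by
  ext i j
  simp only [mul_apply, submatrix_apply, one_apply, id_eq, ite_mul, one_mul, zero_mul, mul_ite,
    mul_one, mul_zero, Finset.univ_eq_attach]
  rw [Finset.sum_attach T
      fun t => if t = j then ∑ s ∈ S.attach, if i = s then D s t else 0 else 0,
    Finset.sum_ite_eq', Finset.sum_attach S fun s => if i = s then D s j else 0,
    Finset.sum_ite_eq]
  split_ifs with hj hi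
  · rfl
  · exact hD i j (.inl hi)
  · exact hD i j (.inr hj)

theorem one_submatrix_mul_mul_one_submatrix {l m : Type*} [Fintype n] [Fintype o]
    [DecidableEq n] [DecidableEq o] [NonAssocSemiring α] (e : l → n) (f : m → o)
    (N : Matrix n o α) :
    (1 : Matrix n n α).submatrix e id * N * (1 : Matrix o o α).submatrix id f =
      N.submatrix e f := by
  ext
  simp [mul_apply, one_apply]

end Matrix

/-- Harvey's update lemma, determinant part: if `Mt` agrees with the nonsingular matrix `M`
outside of the rows `S` and columns `T`, and `Δ = Mt[S,T] - M[S,T]`, then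
`det Mt = det M * det (1 + Δ · M⁻¹[T,S])`; in particular `Mt` is nonsingular iff
`1 + Δ · M⁻¹[T,S]` is. -/
theorem harvey_update_det {F : Type*} [Field F] {n : ℕ}
    (M Mt : Matrix (Fin n) (Fin n) F) (hM : M.det ≠ 0)
    (S T : Finset (Fin n))
    (hagree : ∀ i j, i ∉ S ∨ j ∉ T → Mt i j = M i j) :
    Mt.det = M.det *
      (1 + (Matrix.of fun (i : S) (j : T) => Mt i j - M i j) *
        M⁻¹.submatrix (fun i : T => (i : Fin n)) (fun j : S => (j : Fin n))).det ∧
    (Mt.det ≠ 0 ↔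
      (1 + (Matrix.of fun (i : S) (j : T) => Mt i j - M i j) *
        M⁻¹.submatrix (fun i : T => (i : Fin n)) (fun j : S => (j : Fin n))).det ≠ 0) := by
  have hMt : Mt = M + (1 : Matrix (Fin n) (Fin n) F).submatrix id ((↑) : S → Fin n) *
      ((Mt - M).submatrix ((↑) : S → Fin n) ((↑) : T → Fin n) *
        (1 : Matrix (Fin n) (Fin n) F).submatrix ((↑) : T → Fin n) id) := by
    rw [← Matrix.mul_assoc, ← (Mt - M).eq_one_submatrix_mul_submatrix_mul_one_submatrix S T,
      add_sub_cancel]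
    intro i j hij
    rw [Matrix.sub_apply, hagree i j hij, sub_self]
  have hdet : Mt.det = M.det *
      (1 + (Mt - M).submatrix ((↑) : S → Fin n) ((↑) : T → Fin n) *
        M⁻¹.submatrix ((↑) : T → Fin n) ((↑) : S → Fin n)).det := by
    conv_lhs => rw [hMt]
    rw [det_add_mul _ _ (isUnit_iff_ne_zero.mpr hM), Matrix.mul_assoc, Matrix.mul_assoc,
      ← Matrix.mul_assoc _ M⁻¹, one_submatrix_mul_mul_one_submatrix]
  exact ⟨hdet, by rw [hdet, mul_ne_zero_iff, and_iff_right hM]; rfl⟩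
end

section
/- (Harvey's update lemma, inverse part) Let F be a field, let M be a nonsingular n×n matrix over F, and let S, T be subsets of the index set [n]. Let M̃ be an n×n matrix over F that agrees with M on every entry (i, j) with i ∉ S or j ∉ T, and set Δ = M̃[S, T] − M[S, T]. If M̃ is nonsingular, then M̃⁻¹ = M⁻¹ − M⁻¹[·, S] · (I + Δ · M⁻¹[T, S])⁻¹ · Δ · M⁻¹[T, ·], where I is the S×S identity matrix, M⁻¹[·, S] denotes the restriction of M⁻¹ to the columns in S, and M⁻¹[T, ·] the restriction of M⁻¹ to the rows in T. -/
/-!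
With the coordinate selectors `U = I[·, S]` and `V = I[T, ·]`, the update is the low-rank
perturbation `M̃ = M + U (Δ V)`. The matrix determinant lemma gives
`det M̃ = det M · det (I + Δ V M⁻¹ U)`, so `I + Δ M⁻¹[T, S]` is nonsingular, and the Woodbury
identity turns into the claimed formula because `M⁻¹ U = M⁻¹[·, S]` and `V M⁻¹ = M⁻¹[T, ·]`.
-/

open Matrix

namespace Matrix

theorem inv_add_mul_eq_sub {n m R : Type*} [Fintype n] [DecidableEq n] [Fintype m]
    [DecidableEq m] [CommRing R] {A : Matrix n n R} (U : Matrix n m R) (W : Matrix m n R)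
    (hA : IsUnit A.det) (hAUW : IsUnit (A + U * W).det) :
    (A + U * W)⁻¹ = A⁻¹ - A⁻¹ * U * (1 + W * A⁻¹ * U)⁻¹ * W * A⁻¹ := by
  rw [det_add_mul U W hA] at hAUW
  have hK : IsUnit (1 + W * A⁻¹ * U) :=
    (isUnit_iff_isUnit_det _).2 (isUnit_of_mul_isUnit_right hAUW)
  simpa only [inv_one, Matrix.mul_one] using
    add_mul_mul_inv_eq_sub A U 1 W ((isUnit_iff_isUnit_det A).2 hA) isUnit_one
      (by rwa [inv_one])

variable {ι R : Type*} [DecidableEq ι]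

theorem one_submatrix_mul_apply [Semiring R] {n : Type*} {S : Finset ι}
    (A : Matrix S n R) (i : ι) (t : n) :
    ((1 : Matrix ι ι R).submatrix id (fun s : S => (s : ι)) * A) i t =
      if h : i ∈ S then A ⟨i, h⟩ t else 0 := by
  simp only [mul_apply, submatrix_apply, id, one_apply, ite_mul, one_mul, zero_mul]
  split_ifs with h
  · refine (Fintype.sum_eq_single ⟨i, h⟩ fun s hs => ?_).trans (if_pos rfl)
    exact if_neg fun e => hs (Subtype.ext e.symm)
  · exact Fintype.sum_eq_zero _ fun s => if_neg fun e : i = s => h (e ▸ s.2)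

theorem mul_one_submatrix_apply [Semiring R] {m : Type*} {T : Finset ι}
    (A : Matrix m T R) (s : m) (j : ι) :
    (A * (1 : Matrix ι ι R).submatrix (fun t : T => (t : ι)) id) s j =
      if h : j ∈ T then A s ⟨j, h⟩ else 0 := by
  simp only [mul_apply, submatrix_apply, id, one_apply, mul_ite, mul_one, mul_zero]
  split_ifs with h
  · refine (Fintype.sum_eq_single ⟨j, h⟩ fun t ht => ?_).trans (if_pos rfl)
    exact if_neg fun e => ht (Subtype.ext e)
  · exact Fintype.sum_eq_zero _ fun t => if_neg fun e : (t : ι) = j => h (e ▸ t.2)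

theorem eq_add_one_submatrix_mul_mul_one_submatrix [Ring R] {M N : Matrix ι ι R}
    {S T : Finset ι} (h : ∀ i j, i ∉ S ∨ j ∉ T → N i j = M i j) :
    N = M + (1 : Matrix ι ι R).submatrix id (fun s : S => (s : ι)) *
      (of fun (i : S) (j : T) => N i j - M i j) *
        (1 : Matrix ι ι R).submatrix (fun t : T => (t : ι)) id := by
  ext i j
  rw [add_apply, mul_one_submatrix_apply]
  by_cases hj : j ∈ T
  · by_cases hi : i ∈ S
    · simp [one_submatrix_mul_apply, hi, hj]
    · simp [one_submatrix_mul_apply, hi, hj, h i j (Or.inl hi)]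
  · simp [hj, h i j (Or.inr hj)]

variable [Fintype ι] [Semiring R] {m : Type*}

theorem mul_one_submatrix_id_coe (A : Matrix m ι R) (S : Finset ι) :
    A * (1 : Matrix ι ι R).submatrix id (fun s : S => (s : ι)) =
      A.submatrix id (fun s : S => (s : ι)) := by
  simpa using mul_submatrix_one (Equiv.refl ι) _ A

theorem one_submatrix_coe_id_mul (A : Matrix ι m R) (T : Finset ι) :
    (1 : Matrix ι ι R).submatrix (fun t : T => (t : ι)) id * A =
      A.submatrix (fun t : T => (t : ι)) id := by
  simpa using one_submatrix_mul _ (Equiv.refl ι) A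

end Matrix

/-- Harvey's update lemma, inverse part: if `Mt` agrees with the nonsingular matrix `M`
outside of the rows `S` and columns `T`, `Δ = Mt[S,T] - M[S,T]`, and `Mt` is nonsingular,
then `Mt⁻¹ = M⁻¹ - M⁻¹[·,S] (1 + Δ M⁻¹[T,S])⁻¹ Δ M⁻¹[T,·]`. -/
theorem harvey_update_inv {F : Type*} [Field F] {n : ℕ}
    (M Mt : Matrix (Fin n) (Fin n) F) (hM : M.det ≠ 0)
    (S T : Finset (Fin n))
    (hagree : ∀ i j, i ∉ S ∨ j ∉ T → Mt i j = M i j)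
    (hMt : Mt.det ≠ 0) :
    Mt⁻¹ = M⁻¹ -
      M⁻¹.submatrix id (fun j : S => (j : Fin n)) *
        (1 + (Matrix.of fun (i : S) (j : T) => Mt i j - M i j) *
          M⁻¹.submatrix (fun i : T => (i : Fin n)) (fun j : S => (j : Fin n)))⁻¹ *
        (Matrix.of fun (i : S) (j : T) => Mt i j - M i j) *
        M⁻¹.submatrix (fun i : T => (i : Fin n)) id := by
  set Δ : Matrix S T F := of fun i j => Mt i j - M i j
  have hupdate : Mt = M + (1 : Matrix (Fin n) (Fin n) F).submatrix id (fun s : S => (s : Fin n)) *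
      (Δ * (1 : Matrix (Fin n) (Fin n) F).submatrix (fun t : T => (t : Fin n)) id) := by
    rw [← Matrix.mul_assoc]
    exact eq_add_one_submatrix_mul_mul_one_submatrix hagree
  rw [hupdate, inv_add_mul_eq_sub _ _ hM.isUnit (hupdate ▸ hMt.isUnit)]
  simp only [Matrix.mul_assoc, one_submatrix_coe_id_mul]
  rw [mul_one_submatrix_id_coe, submatrix_submatrix, Function.comp_id, Function.id_comp,
    ← Matrix.mul_assoc M⁻¹, mul_one_submatrix_id_coe]
end

section
/- Let F be a field, let M be an m×m matrix over F, and let X be a subset of the index set such that the principal submatrix M[X, X] is nonsingular and the rank of M equals |X|. Then the Schur complement of M[X, X] in M vanishes: M[X̄, X̄] = M[X̄, X] · M[X, X]⁻¹ · M[X, X̄], where X̄ denotes the complement of X in the index set. -/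
theorem Matrix.det_eq_zero_of_rank_lt_card {n R : Type*} [Fintype n] [DecidableEq n] [CommRing R]
    [IsDomain R] (A : Matrix n n R) (h : A.rank < Fintype.card n) : A.det = 0 :=
  by_contra fun hA => h.ne (rank_of_det_ne_zero hA)

/-- Bordering the nonsingular `A = M[r, c]` by one more row and column of `M` gives a submatrix
of rank at most `|l|`, hence singular; its determinant is `det A` times the corresponding entry
of the Schur complement. -/
theorem Matrix.submatrix_eq_mul_inv_mul_of_rank_le {K : Type*} [Field K]
    {m n l p q : Type*} [Fintype n] [Fintype l] [DecidableEq l]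
    (M : Matrix m n K) (r : l → m) (c : l → n) (r' : p → m) (c' : q → n)
    (hA : (M.submatrix r c).det ≠ 0) (hrank : M.rank ≤ Fintype.card l) :
    M.submatrix r' c' = M.submatrix r' c * (M.submatrix r c)⁻¹ * M.submatrix r c' := by
  set A := M.submatrix r c
  have : Invertible A := invertibleOfIsUnitDet A hA.isUnit
  ext i j
  set N := M.submatrix (Sum.elim r fun _ : Unit => r' i) (Sum.elim c fun _ : Unit => c' j)
  have hN : N = fromBlocks A (M.submatrix r fun _ : Unit => c' j)
      (M.submatrix (fun _ : Unit => r' i) c) (M.submatrix (fun _ : Unit => r' i) fun _ => c' j) := by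
    ext (a | a) (b | b) <;> rfl
  have hN_singular : N.det = 0 := by
    refine N.det_eq_zero_of_rank_lt_card ?_
    calc N.rank ≤ M.rank := M.rank_submatrix_le _ _
      _ ≤ Fintype.card l := hrank
      _ < Fintype.card (l ⊕ Unit) := by simp
  rw [hN, det_fromBlocks₁₁, det_unique (n := Unit), mul_eq_zero] at hN_singular
  have hentry := sub_eq_zero.mp (hN_singular.resolve_left hA)
  simpa [Matrix.mul_apply, invOf_eq_nonsing_inv] using hentry

/-- If `M[X,X]` is nonsingular and `rank M = |X|`, then the Schur complement of `M[X,X]`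
in `M` vanishes: `M[X̄,X̄] = M[X̄,X] M[X,X]⁻¹ M[X,X̄]`. -/
theorem schur_complement_vanishes {F : Type*} [Field F] {m : ℕ}
    (M : Matrix (Fin m) (Fin m) F) (X : Finset (Fin m))
    (hX : (M.submatrix (fun i : X => (i : Fin m)) (fun j : X => (j : Fin m))).det ≠ 0)
    (hrank : M.rank = X.card) :
    M.submatrix (fun i : (Xᶜ : Finset (Fin m)) => (i : Fin m))
        (fun j : (Xᶜ : Finset (Fin m)) => (j : Fin m)) =
      M.submatrix (fun i : (Xᶜ : Finset (Fin m)) => (i : Fin m)) (fun j : X => (j : Fin m)) *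
        (M.submatrix (fun i : X => (i : Fin m)) (fun j : X => (j : Fin m)))⁻¹ *
        M.submatrix (fun i : X => (i : Fin m)) (fun j : (Xᶜ : Finset (Fin m)) => (j : Fin m)) :=
  M.submatrix_eq_mul_inv_mul_of_rank_le _ _ _ _ hX (by rw [hrank, Fintype.card_coe])
end

section
/- Let G be a finite simple graph, and let S and T be disjoint sets of vertices such that every neighbor of a vertex of T lies in T ∪ S. Then for every u ∈ T and every v ∈ S, the extended distance satisfies edist_G(u, v) = inf over s ∈ S of ( edist_{G[S ∪ T]}(u, s) + edist_G(s, v) ), where G[S ∪ T] denotes the subgraph of G induced on S ∪ T and the extended distance edist takes values in ℕ ∪ {∞}, being ∞ when the two vertices are not connected. -/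
/-!
Every `u`–`v` walk starts in `T` and ends in `S`; since `T` has no neighbours outside `T ∪ S`,
the walk stays inside `S ∪ T` up to its first vertex `s ∈ S`. Cutting it there bounds the
infimum by the length of the walk, hence by `edist u v`. The reverse inequality is the triangle
inequality through `s`, since distances in an induced subgraph dominate those in `G`.
-/

open SimpleGraph Set

namespace SimpleGraph

variable {V W : Type*} {G : SimpleGraph V}

lemma Hom.edist_le {G' : SimpleGraph W} (f : G →g G') (u v : V) :
    G'.edist (f u) (f v) ≤ G.edist u v := by
  rw [edist_eq_sInf (G := G)]
  exact le_sInf <| forall_mem_range.2 fun p =>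
    p.length_map f ▸ SimpleGraph.edist_le (p.map f)

lemma Walk.exists_induce_prefix_of_nbhd_subset {S T : Set V}
    (hT : ∀ v ∈ T, ∀ w, G.Adj v w → w ∈ T ∪ S) {u v : V} (p : G.Walk u v) (hu : u ∈ T)
    (hv : v ∈ S) :
    ∃ (s : V) (hs : s ∈ S) (q : (G.induce (S ∪ T)).Walk ⟨u, .inr hu⟩ ⟨s, .inl hs⟩)
      (r : G.Walk s v), q.length + r.length = p.length := by
  induction p with
  | nil => exact ⟨_, hv, .nil, .nil, rfl⟩
  | @cons a w b h p ih =>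
    have hadj : (G.induce (S ∪ T)).Adj ⟨a, .inr hu⟩ ⟨w, (hT a hu w h).symm⟩ := h
    rcases hT a hu w h with hwT | hwS
    · obtain ⟨s, hs, q, r, hlen⟩ := ih hwT hv
      refine ⟨s, hs, .cons hadj q, r, ?_⟩
      simp only [Walk.length_cons]
      omega
    · refine ⟨w, hwS, .cons hadj .nil, p, ?_⟩
      simp only [Walk.length_cons, Walk.length_nil]
      omega

end SimpleGraph

theorem edist_T_to_S_general {V : Type*} (G : SimpleGraph V) (S T : Set V)
    (hT : ∀ v ∈ T, ∀ w, G.Adj v w → w ∈ T ∪ S)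
    (u v : V) (hu : u ∈ T) (hv : v ∈ S) :
    G.edist u v =
      ⨅ s : S, ((G.induce (S ∪ T)).edist ⟨u, Set.mem_union_right S hu⟩
          ⟨(s : V), Set.mem_union_left T s.2⟩ + G.edist s v) := by
  apply le_antisymm
  · refine le_iInf fun s => ?_
    calc G.edist u v ≤ G.edist u s + G.edist s v := G.edist_triangle
      _ ≤ _ := by gcongr; exact (Embedding.induce (S ∪ T)).toHom.edist_le _ _
  · rw [edist_eq_sInf]
    refine le_sInf <| forall_mem_range.2 fun p => ?_
    obtain ⟨s, hs, q, r, hlen⟩ := p.exists_induce_prefix_of_nbhd_subset hT hu hv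
    refine (iInf_le _ ⟨s, hs⟩).trans ?_
    calc _ ≤ (q.length + r.length : ℕ∞) := add_le_add (edist_le q) (edist_le r)
      _ = p.length := by exact_mod_cast hlen

/-- If `T` is a union of connected components of `G - S` (every neighbor of a vertex of `T`
lies in `T ∪ S`), then for `u ∈ T` and `v ∈ S`, the distance from `u` to `v` in `G` is the
infimum over `s ∈ S` of the distance from `u` to `s` in `G[S ∪ T]` plus the distance from `s`
to `v` in `G`. -/
theorem edist_T_to_S {V : Type*} (G : SimpleGraph V) (S T : Set V)
    (hdisj : Disjoint S T)
    (hT : ∀ v ∈ T, ∀ w, G.Adj v w → w ∈ T ∪ S)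
    (u v : V) (hu : u ∈ T) (hv : v ∈ S) :
    G.edist u v =
      ⨅ s : S, ((G.induce (S ∪ T)).edist ⟨u, Set.mem_union_right S hu⟩
          ⟨(s : V), Set.mem_union_left T s.2⟩ + G.edist s v) :=
  edist_T_to_S_general G S T hT u v hu hv
end
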